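/- Let d ≥ 4 and let X be a finite nonempty set of 2-dimensional linear subspaces of ℝ^d that is B_d-invariant. Then X is an equal-weight tight 2-fusion frame (i.e. there is A > 0 with ∑_{W∈X}‖P_W x‖^4 = A‖x‖^4 for all x ∈ ℝ^d) if and only if ∑_{W∈X} ‖P_W e_1‖^4 = ∑_{W∈X} ‖P_W ((e_1+e_2)/√2)‖^4, where e_1, e_2 are the first two standard basis vectors of ℝ^d. -/

import Mathlib

open scoped BigOperators

/-- Orthogonal projection onto a subspace `V` of `ℝ^d`, as a linear endomorphism. -/
noncomputable def proj {d : ℕ} (V : Submodule ℝ (EuclideanSpace ℝ (Fin d))) :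
    EuclideanSpace ℝ (Fin d) →ₗ[ℝ] EuclideanSpace ℝ (Fin d) :=
  V.subtype ∘ₗ (Submodule.orthogonalProjection V).toLinearMap

/-- `g` is a signed permutation matrix: `g = diag(s)·σ` with `s ∈ {±1}^d` and `σ`
a permutation matrix (the hyperoctahedral group `B_d ⊆ O(d)`). -/
def IsSignedPerm {d : ℕ} (g : Matrix (Fin d) (Fin d) ℝ) : Prop :=
  ∃ (σ : Equiv.Perm (Fin d)) (s : Fin d → ℝ),
    (∀ i, s i = 1 ∨ s i = -1) ∧ ∀ i j, g i j = if i = σ j then s i else 0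

/-!
Write `F(x) = ∑_{W ∈ X} ‖P_W x‖⁴ = ∑ T_{ijkl} x_i x_j x_k x_l` with
`T_{ijkl} = ∑_W ⟪e_i, P_W e_j⟫ ⟪e_k, P_W e_l⟫`. Flipping the sign of a coordinate that occurs
only once among `i, j, k, l` negates `T_{ijkl}`, so `T_{ijkl} = 0` unless the indices pair up, and
permutation invariance leaves only the three values `T_{aaaa}`, `T_{aabb}`, `T_{abab}`. Hence
`F(x) = α ‖x‖⁴ + γ ∑ x_i⁴`. Both test vectors are unit vectors, with `∑ x_i⁴` equal to `1` and
`1/2`, so the test says exactly `γ = 0`, i.e. `F = α ‖·‖⁴`; and then `α ≥ 1`, since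
`F(w) ≥ ‖w‖⁴` for `w` in a nonzero member of `X`.
-/

open Finset
open scoped RealInnerProductSpace

theorem Finset.sum_comp_of_injective_of_mapsTo {α M : Type*} [AddCommMonoid M] {s : Finset α}
    {f : α → α} (hf : Function.Injective f) (hs : ∀ a ∈ s, f a ∈ s) (φ : α → M) :
    ∑ a ∈ s, φ (f a) = ∑ a ∈ s, φ a :=
  sum_nbij f hs hf.injOn
    ((s.finite_toSet.injOn_iff_bijOn_of_mapsTo hs).mp hf.injOn).surjOn fun _ _ => rfl

theorem Equiv.Perm.exists_apply_eq_and_apply_eq {α : Type*} [DecidableEq α] {a b i j : α}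
    (hab : a ≠ b) (hij : i ≠ j) : ∃ σ : Equiv.Perm α, σ a = i ∧ σ b = j := by
  have hi : i ≠ Equiv.swap a i b := by
    simpa using (Equiv.swap a i).injective.ne hab
  exact ⟨Equiv.swap (Equiv.swap a i b) j * Equiv.swap a i,
    by simp [Equiv.swap_apply_of_ne_of_ne hi hij], by simp⟩

section InnerProductSpace

variable {E : Type*} [NormedAddCommGroup E] [InnerProductSpace ℝ E]

theorem Submodule.norm_starProjection_sq (K : Submodule ℝ E) [K.HasOrthogonalProjection]
    (x : E) : ‖K.starProjection x‖ ^ 2 = ⟪x, K.starProjection x⟫ := by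
  simpa [real_inner_comm] using (K.re_inner_starProjection_eq_normSq x).symm

theorem LinearIsometry.inner_map_starProjection_map (f : E →ₗᵢ[ℝ] E) (K : Submodule ℝ E)
    [K.HasOrthogonalProjection] [(K.map f.toLinearMap).HasOrthogonalProjection] (x y : E) :
    ⟪f x, (K.map f.toLinearMap).starProjection (f y)⟫ = ⟪x, K.starProjection y⟫ := by
  rw [← f.map_starProjection, f.inner_map_map]

theorem one_le_of_sum_norm_starProjection_pow_four_eq [FiniteDimensional ℝ E]
    {X : Finset (Submodule ℝ E)} {W₀ : Submodule ℝ E} (hW₀ : W₀ ∈ X) (hW₀_ne : W₀ ≠ ⊥) {A : ℝ}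
    (hA : ∀ x, ∑ W ∈ X, ‖W.starProjection x‖ ^ 4 = A * ‖x‖ ^ 4) : 1 ≤ A := by
  obtain ⟨w, hw, hw0⟩ := W₀.exists_mem_ne_zero_of_ne_bot hW₀_ne
  have hle : 1 * ‖w‖ ^ 4 ≤ A * ‖w‖ ^ 4 :=
    calc 1 * ‖w‖ ^ 4 = ‖W₀.starProjection w‖ ^ 4 := by
          rw [one_mul, W₀.starProjection_eq_self_iff.mpr hw]
      _ ≤ ∑ W ∈ X, ‖W.starProjection w‖ ^ 4 :=
        single_le_sum (f := fun W => ‖W.starProjection w‖ ^ 4) (fun _ _ => by positivity) hW₀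
      _ = A * ‖w‖ ^ 4 := hA w
  exact le_of_mul_le_mul_right hle (pow_pos (norm_pos_iff.mpr hw0) 4)

end InnerProductSpace

section Coordinates

open EuclideanSpace

variable {ι : Type*} [Fintype ι] [DecidableEq ι]

theorem inner_starProjection_eq_sum (K : Submodule ℝ (EuclideanSpace ℝ ι))
    [K.HasOrthogonalProjection] (x y : EuclideanSpace ℝ ι) :
    ⟪x, K.starProjection y⟫ =
      ∑ i, ∑ j, x i * y j * ⟪single i (1 : ℝ), K.starProjection (single j 1)⟫ := by
  conv_lhs => rw [← (EuclideanSpace.basisFun ι ℝ).sum_repr x,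
    ← (EuclideanSpace.basisFun ι ℝ).sum_repr y]
  simp only [basisFun_repr, basisFun_apply, map_sum, map_smul, inner_sum, inner_smul_right,
    sum_inner, inner_smul_left, Real.ringHom_apply, mul_sum, mul_assoc]
  rw [sum_comm]
  simp only [mul_left_comm]

noncomputable def fusionTensor (X : Finset (Submodule ℝ (EuclideanSpace ℝ ι))) (i j k l : ι) :
    ℝ :=
  ∑ W ∈ X, ⟪single i 1, W.starProjection (single j 1)⟫ *
    ⟪single k 1, W.starProjection (single l 1)⟫

theorem sum_norm_starProjection_pow_four_eq_sum_fusionTensor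
    (X : Finset (Submodule ℝ (EuclideanSpace ℝ ι))) (x : EuclideanSpace ℝ ι) :
    ∑ W ∈ X, ‖W.starProjection x‖ ^ 4 =
      ∑ i, ∑ j, ∑ k, ∑ l, x i * x j * x k * x l * fusionTensor X i j k l := by
  have h (W : Submodule ℝ (EuclideanSpace ℝ ι)) : ‖W.starProjection x‖ ^ 4 =
      ∑ i, ∑ j, ∑ k, ∑ l, x i * x j * x k * x l *
        (⟪single i 1, W.starProjection (single j 1)⟫ *
          ⟪single k 1, W.starProjection (single l 1)⟫) := by
    rw [show 4 = 2 * 2 from rfl, pow_mul, W.norm_starProjection_sq, inner_starProjection_eq_sum,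
      sq]
    simp_rw [sum_mul, mul_sum]
    exact sum_congr rfl fun i _ => sum_congr rfl fun j _ => sum_congr rfl fun k _ =>
      sum_congr rfl fun l _ => by ring
  simp only [h, fusionTensor, mul_sum]
  rw [sum_comm]
  refine sum_congr rfl fun i _ => ?_
  rw [sum_comm]
  refine sum_congr rfl fun j _ => ?_
  rw [sum_comm]
  exact sum_congr rfl fun k _ => sum_comm

theorem fusionTensor_swap_left (X : Finset (Submodule ℝ (EuclideanSpace ℝ ι))) (i j k l : ι) :
    fusionTensor X j i k l = fusionTensor X i j k l := by
  unfold fusionTensor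
  refine sum_congr rfl fun W _ => ?_
  rw [← W.inner_starProjection_left_eq_right, real_inner_comm]

theorem fusionTensor_swap_pairs (X : Finset (Submodule ℝ (EuclideanSpace ℝ ι))) (i j k l : ι) :
    fusionTensor X k l i j = fusionTensor X i j k l := by
  simp only [fusionTensor, mul_comm]

theorem sum_quartic_pairing_eq (x : ι → ℝ) (α β γ : ℝ) :
    ∑ i, ∑ j, ∑ k, ∑ l, x i * x j * x k * x l *
      ((if i = j ∧ k = l then α else 0) + (if i = k ∧ j = l then β else 0) +
        (if i = l ∧ j = k then β else 0) + (if i = j ∧ j = k ∧ k = l then γ else 0)) =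
      (α + 2 * β) * (∑ i, x i ^ 2) ^ 2 + γ * ∑ i, x i ^ 4 := by
  simp only [ite_and, mul_add, mul_ite, mul_zero, sum_add_distrib, sum_ite_irrel, sum_ite_eq,
    mem_univ, ↓reduceIte, sum_const_zero]
  simp only [sq, sum_mul, mul_sum, ← sum_add_distrib]
  refine sum_congr rfl fun i _ => ?_
  congr 1
  · exact sum_congr rfl fun j _ => by ring
  · ring

def signedPermMatrix (σ : Equiv.Perm ι) (s : ι → ℝ) : Matrix ι ι ℝ :=
  fun i j => if i = σ j then s i else 0

theorem toEuclideanLin_signedPermMatrix_apply (σ : Equiv.Perm ι) (s : ι → ℝ)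
    (x : EuclideanSpace ℝ ι) (i : ι) :
    Matrix.toEuclideanLin (signedPermMatrix σ s) x i = s i * x (σ.symm i) := by
  simp [Matrix.toLpLin_apply, Matrix.mulVec, dotProduct, signedPermMatrix,
    ← Equiv.symm_apply_eq]

theorem toEuclideanLin_signedPermMatrix_single (σ : Equiv.Perm ι) (s : ι → ℝ) (j : ι) :
    Matrix.toEuclideanLin (signedPermMatrix σ s) (single j 1) = s (σ j) • single (σ j) 1 := by
  ext i
  rw [toEuclideanLin_signedPermMatrix_apply]
  by_cases h : i = σ j <;> simp [h, Equiv.symm_apply_eq]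

theorem inner_toEuclideanLin_signedPermMatrix {σ : Equiv.Perm ι} {s : ι → ℝ}
    (hs : ∀ i, s i = 1 ∨ s i = -1) (x y : EuclideanSpace ℝ ι) :
    ⟪Matrix.toEuclideanLin (signedPermMatrix σ s) x,
      Matrix.toEuclideanLin (signedPermMatrix σ s) y⟫ = ⟪x, y⟫ := by
  simp only [PiLp.inner_apply, toEuclideanLin_signedPermMatrix_apply]
  rw [← σ.symm.sum_comp (fun i => ⟪x i, y i⟫)]
  refine sum_congr rfl fun i _ => ?_
  rcases hs i with h | h <;> simp [h]

theorem fusionTensor_signedPerm {X : Finset (Submodule ℝ (EuclideanSpace ℝ ι))}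
    {σ : Equiv.Perm ι} {s : ι → ℝ} (hs : ∀ i, s i = 1 ∨ s i = -1)
    (hX : ∀ W ∈ X, W.map (Matrix.toEuclideanLin (signedPermMatrix σ s)) ∈ X) (i j k l : ι) :
    s (σ i) * s (σ j) * s (σ k) * s (σ l) * fusionTensor X (σ i) (σ j) (σ k) (σ l) =
      fusionTensor X i j k l := by
  set f := (Matrix.toEuclideanLin (signedPermMatrix σ s)).isometryOfInner
    (inner_toEuclideanLin_signedPermMatrix hs)
  have key (W : Submodule ℝ (EuclideanSpace ℝ ι)) (i j : ι) :
      s (σ i) * s (σ j) *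
          ⟪single (σ i) (1 : ℝ), (W.map f.toLinearMap).starProjection (single (σ j) 1)⟫ =
        ⟪single i 1, W.starProjection (single j 1)⟫ := by
    rw [← f.inner_map_starProjection_map W]
    simp only [f, LinearMap.coe_isometryOfInner, toEuclideanLin_signedPermMatrix_single,
      map_smul, real_inner_smul_left, real_inner_smul_right]
    ring
  unfold fusionTensor
  rw [mul_sum,
    ← sum_comp_of_injective_of_mapsTo (Submodule.map_injective_of_injective f.injective) hX]
  refine sum_congr rfl fun W _ => ?_
  rw [← key W i j, ← key W k l]
  ring

theorem sum_smul_single_add_single_pow {a b : ι} (hab : a ≠ b) (c : ℝ) {n : ℕ} (hn : n ≠ 0) :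
    ∑ i, (c • (single a 1 + single b 1 : EuclideanSpace ℝ ι)) i ^ n = 2 * c ^ n := by
  have h (i : ι) : (c • (single a 1 + single b 1 : EuclideanSpace ℝ ι)) i ^ n =
      (if i = a then c ^ n else 0) + (if i = b then c ^ n else 0) := by
    by_cases ha : i = a <;> by_cases hb : i = b <;> simp_all [zero_pow hn]
  rw [sum_congr rfl fun i _ => h i, sum_add_distrib]
  simp [two_mul]

theorem norm_inv_sqrt_two_smul_single_add_single {a b : ι} (hab : a ≠ b) :
    ‖(√2)⁻¹ • (single a (1 : ℝ) + single b 1 : EuclideanSpace ℝ ι)‖ = 1 := by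
  rw [← sq_eq_sq₀ (norm_nonneg _) zero_le_one, one_pow, EuclideanSpace.norm_sq_eq]
  simpa using sum_smul_single_add_single_pow hab (√2)⁻¹ two_ne_zero

theorem sum_inv_sqrt_two_smul_single_add_single_pow_four {a b : ι} (hab : a ≠ b) :
    ∑ i, ((√2)⁻¹ • (single a (1 : ℝ) + single b 1 : EuclideanSpace ℝ ι)) i ^ 4 = 1 / 2 := by
  rw [sum_smul_single_add_single_pow hab _ four_ne_zero, inv_pow,
    show (4 : ℕ) = 2 * 2 from rfl, pow_mul, Real.sq_sqrt zero_le_two]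
  norm_num

end Coordinates

def IsSignedPermInvariant {d : ℕ} (X : Finset (Submodule ℝ (EuclideanSpace ℝ (Fin d)))) :
    Prop :=
  ∀ g : Matrix (Fin d) (Fin d) ℝ, IsSignedPerm g →
    ∀ W ∈ X, Submodule.map (Matrix.toEuclideanLin g) W ∈ X

namespace IsSignedPermInvariant

variable {d : ℕ} {X : Finset (Submodule ℝ (EuclideanSpace ℝ (Fin d)))}

theorem fusionTensor_perm (hX : IsSignedPermInvariant X) (σ : Equiv.Perm (Fin d))
    (i j k l : Fin d) : fusionTensor X (σ i) (σ j) (σ k) (σ l) = fusionTensor X i j k l := by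
  simpa using fusionTensor_signedPerm (σ := σ) (s := 1) (fun _ => Or.inl rfl)
    (hX _ ⟨σ, 1, fun _ => Or.inl rfl, fun _ _ => rfl⟩) i j k l

theorem fusionTensor_eq_zero (hX : IsSignedPermInvariant X) {i j k l : Fin d} (hj : j ≠ i)
    (hk : k ≠ i) (hl : l ≠ i) : fusionTensor X i j k l = 0 := by
  have hs (t : Fin d) : (if t = i then -1 else 1 : ℝ) = 1 ∨ (if t = i then -1 else 1 : ℝ) = -1 := by
    split_ifs <;> simp
  have := fusionTensor_signedPerm (σ := 1) hs (hX _ ⟨1, _, hs, fun _ _ => rfl⟩) i j k l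
  simp only [Equiv.Perm.coe_one, id_eq, ↓reduceIte, hj, hk, hl, mul_one, neg_mul, one_mul] at this
  linarith

theorem fusionTensor_eq (hX : IsSignedPermInvariant X) {a b : Fin d} (hab : a ≠ b)
    (i j k l : Fin d) :
    fusionTensor X i j k l =
      (if i = j ∧ k = l then fusionTensor X a a b b else 0) +
      (if i = k ∧ j = l then fusionTensor X a b a b else 0) +
      (if i = l ∧ j = k then fusionTensor X a b a b else 0) +
      (if i = j ∧ j = k ∧ k = l then
        fusionTensor X a a a a - fusionTensor X a a b b - 2 * fusionTensor X a b a b else 0) := by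
  have hdiag (i : Fin d) : fusionTensor X i i i i = fusionTensor X a a a a := by
    simpa using hX.fusionTensor_perm (Equiv.swap a i) a a a a
  have hpair {i j : Fin d} (hij : i ≠ j) :
      fusionTensor X i i j j = fusionTensor X a a b b ∧
        fusionTensor X i j i j = fusionTensor X a b a b := by
    obtain ⟨σ, rfl, rfl⟩ := Equiv.Perm.exists_apply_eq_and_apply_eq hab hij
    exact ⟨hX.fusionTensor_perm σ a a b b, hX.fusionTensor_perm σ a b a b⟩
  grind [hX.fusionTensor_eq_zero, fusionTensor_swap_left, fusionTensor_swap_pairs]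

theorem sum_norm_starProjection_pow_four_eq (hX : IsSignedPermInvariant X) {a b : Fin d}
    (hab : a ≠ b) (x : EuclideanSpace ℝ (Fin d)) :
    ∑ W ∈ X, ‖W.starProjection x‖ ^ 4 =
      (fusionTensor X a a b b + 2 * fusionTensor X a b a b) * ‖x‖ ^ 4 +
        (fusionTensor X a a a a - fusionTensor X a a b b - 2 * fusionTensor X a b a b) *
          ∑ i, x i ^ 4 := by
  have hx : ‖x‖ ^ 4 = (∑ i, x i ^ 2) ^ 2 := by
    rw [show 4 = 2 * 2 from rfl, pow_mul, EuclideanSpace.norm_sq_eq]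
    simp
  rw [sum_norm_starProjection_pow_four_eq_sum_fusionTensor, hx, ← sum_quartic_pairing_eq]
  exact sum_congr rfl fun i _ => sum_congr rfl fun j _ => sum_congr rfl fun k _ =>
    sum_congr rfl fun l _ => by rw [hX.fusionTensor_eq hab i j k l]

end IsSignedPermInvariant

theorem proj_apply {d : ℕ} (V : Submodule ℝ (EuclideanSpace ℝ (Fin d)))
    (x : EuclideanSpace ℝ (Fin d)) : proj V x = V.starProjection x := rfl

/-- two-point test: a `B_d`-invariant finite nonempty set
`X ⊆ G_{2,d}` (`d ≥ 4`) is an equal-weight tight 2-fusion frame iff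
`∑_{W∈X} ‖P_W e₁‖⁴ = ∑_{W∈X} ‖P_W ((e₁+e₂)/√2)‖⁴`. -/
theorem stmt5 (d : ℕ) (hd : 4 ≤ d)
    (X : Finset (Submodule ℝ (EuclideanSpace ℝ (Fin d))))
    (hne : X.Nonempty)
    (hdim : ∀ W ∈ X, Module.finrank ℝ W = 2)
    (hinv : ∀ g : Matrix (Fin d) (Fin d) ℝ, IsSignedPerm g →
      ∀ W ∈ X, Submodule.map (Matrix.toEuclideanLin g) W ∈ X) :
    (∃ A : ℝ, 0 < A ∧ ∀ x : EuclideanSpace ℝ (Fin d),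
        ∑ W ∈ X, ‖proj W x‖ ^ 4 = A * ‖x‖ ^ 4) ↔
    ∑ W ∈ X, ‖proj W (EuclideanSpace.single (⟨0, by omega⟩ : Fin d) (1 : ℝ))‖ ^ 4 =
      ∑ W ∈ X, ‖proj W ((Real.sqrt 2)⁻¹ •
        (EuclideanSpace.single (⟨0, by omega⟩ : Fin d) (1 : ℝ) +
          EuclideanSpace.single (⟨1, by omega⟩ : Fin d) (1 : ℝ)))‖ ^ 4 := by
  set a : Fin d := ⟨0, by omega⟩
  set b : Fin d := ⟨1, by omega⟩
  have hab : a ≠ b := by simp [a, b, Fin.ext_iff]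
  have hF := IsSignedPermInvariant.sum_norm_starProjection_pow_four_eq hinv hab
  set α := fusionTensor X a a b b + 2 * fusionTensor X a b a b
  set γ := fusionTensor X a a a a - fusionTensor X a a b b - 2 * fusionTensor X a b a b
  have he : ∑ W ∈ X, ‖proj W (EuclideanSpace.single a 1)‖ ^ 4 = α + γ := by
    simp [proj_apply, hF]
  have hu : ∑ W ∈ X,
      ‖proj W ((√2)⁻¹ • (EuclideanSpace.single a 1 + EuclideanSpace.single b 1))‖ ^ 4 =
        α + γ / 2 := by
    simp only [proj_apply, hF, norm_inv_sqrt_two_smul_single_add_single hab,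
      sum_inv_sqrt_two_smul_single_add_single_pow_four hab]
    ring
  rw [he, hu]
  constructor
  · rintro ⟨A, -, hA⟩
    have h1 := hA (EuclideanSpace.single a 1)
    have h2 := hA ((√2)⁻¹ • (EuclideanSpace.single a 1 + EuclideanSpace.single b 1))
    rw [he, PiLp.norm_single, norm_one, one_pow] at h1
    rw [hu, norm_inv_sqrt_two_smul_single_add_single hab, one_pow] at h2
    linarith
  · intro h
    have hα (x : EuclideanSpace ℝ (Fin d)) : ∑ W ∈ X, ‖W.starProjection x‖ ^ 4 = α * ‖x‖ ^ 4 := by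
      rw [hF, show γ = 0 by linarith]
      ring
    obtain ⟨W₀, hW₀⟩ := hne
    have hW₀_ne : W₀ ≠ ⊥ := by
      rw [Ne, ← Submodule.finrank_eq_zero, hdim W₀ hW₀]
      norm_num
    exact ⟨α, one_pos.trans_le (one_le_of_sum_norm_starProjection_pow_four_eq hW₀ hW₀_ne hα), hα⟩
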